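/- arXiv:2304.06294 — 3 statements merged into one kernel-verified Lean document; each statement's English description precedes it below -/
import Mathlib

section
/- Let F and F' be finite directed graphs such that there is no surjective homomorphism from F onto F'. Then there exists an induced subgraph H of F' (i.e., the restriction of F' to a subset of its vertices) such that the number of homomorphisms from F to H differs from the number of homomorphisms from F' to H. -/
def IsHom {α β : Type} (E : α → α → Prop) (F : β → β → Prop) (f : α → β) : Prop :=
  ∀ a b, E a b → F (f a) (f b)

noncomputable def homCount {α β : Type} (E : α → α → Prop) (F : β → β → Prop) : ℕ :=
  Nat.card {f : α → β // IsHom E F f}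

def sumRel {α β : Type} (E : α → α → Prop) (F : β → β → Prop) :
    α ⊕ β → α ⊕ β → Prop
  | .inl a, .inl b => E a b
  | .inr a, .inr b => F a b
  | _, _ => False

def prodRel {α β : Type} (E : α → α → Prop) (F : β → β → Prop) :
    α × β → α × β → Prop :=
  fun p q => E p.1 q.1 ∧ F p.2 q.2

def Conn {α : Type} (E : α → α → Prop) : Prop :=
  Nonempty α ∧ ∀ a b : α, Relation.ReflTransGen (fun x y => E x y ∨ E y x) a b

open Classical Finset in
noncomputable def nIn {α β : Type} [Fintype α] [Fintype β]
    (E : α → α → Prop) (E' : β → β → Prop) (S : Finset β) : ℕ :=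
  (Finset.univ.filter (fun f : α → β => IsHom E E' f ∧ ∀ a, f a ∈ S)).card

open Classical Finset in
noncomputable def nEx {α β : Type} [Fintype α] [Fintype β]
    (E : α → α → Prop) (E' : β → β → Prop) (S : Finset β) : ℕ :=
  (Finset.univ.filter
    (fun f : α → β => IsHom E E' f ∧ Finset.image f Finset.univ = S)).card

open Classical Finset in
lemma homCount_eq_nIn {α β : Type} [Fintype α] [Fintype β]
    (E : α → α → Prop) (E' : β → β → Prop) (S : Finset β) :
    homCount E (fun a b : (↑S : Set β) => E' a b) = nIn E E' S := by
  have e : {f : α → (↑S : Set β) // IsHom E (fun a b : (↑S : Set β) => E' a b) f} ≃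
      {f : α → β // IsHom E E' f ∧ ∀ a, f a ∈ S} :=
    { toFun := fun f => ⟨fun a => (f.1 a : β), fun a b h => f.2 a b h,
        fun a => (f.1 a).2⟩
      invFun := fun g => ⟨fun a => ⟨g.1 a, g.2.2 a⟩, fun a b h => g.2.1 a b h⟩
      left_inv := fun f => rfl
      right_inv := fun g => rfl }
  rw [homCount, Nat.card_congr e, Nat.card_eq_fintype_card, nIn]
  simp [Fintype.card_subtype]

open Classical Finset in
lemma nIn_eq_sum {α β : Type} [Fintype α] [Fintype β]
    (E : α → α → Prop) (E' : β → β → Prop) (S : Finset β) :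
    nIn E E' S = ∑ T ∈ S.powerset, nEx E E' T := by
  unfold nIn nEx
  rw [Finset.card_eq_sum_card_fiberwise
    (f := fun g : α → β => Finset.image g Finset.univ) (t := S.powerset)]
  · refine Finset.sum_congr rfl fun T hT => ?_
    rw [Finset.mem_powerset] at hT
    congr 1
    rw [Finset.filter_filter]
    apply Finset.filter_congr
    intro g _
    constructor
    · rintro ⟨⟨h1, _⟩, h3⟩; exact ⟨h1, h3⟩
    · rintro ⟨h1, h3⟩
      refine ⟨⟨h1, fun a => ?_⟩, h3⟩
      exact hT (h3 ▸ Finset.mem_image_of_mem g (Finset.mem_univ a))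
  · intro g hg
    rw [Finset.mem_coe, Finset.mem_filter] at hg
    rw [Finset.mem_coe, Finset.mem_powerset]
    intro b hb
    rw [Finset.mem_image] at hb
    obtain ⟨a, _, rfl⟩ := hb
    exact hg.2.2 a

theorem exists_distinguishing_induced_subgraph {α β : Type} [Fintype α] [Fintype β]
    (E : α → α → Prop) (E' : β → β → Prop)
    (hnosur : ¬ ∃ f : α → β, IsHom E E' f ∧ Function.Surjective f) :
    ∃ S : Set β,
      homCount E (fun a b : S => E' a b) ≠ homCount E' (fun a b : S => E' a b) := by
  classical
  by_contra h
  push_neg at h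
  have hIn : ∀ S : Finset β, nIn E E' S = nIn E' E' S := fun S => by
    rw [← homCount_eq_nIn, ← homCount_eq_nIn, h ↑S]
  have hEx : ∀ S : Finset β, nEx E E' S = nEx E' E' S := by
    intro S
    induction S using Finset.strongInductionOn with
    | _ S ih =>
      have h1 := nIn_eq_sum E E' S
      have h2 := nIn_eq_sum E' E' S
      rw [hIn S, h2] at h1
      rw [← Finset.sum_erase_add _ _ (Finset.mem_powerset_self S),
        ← Finset.sum_erase_add _ _ (Finset.mem_powerset_self S)] at h1
      have hsum : ∑ T ∈ S.powerset.erase S, nEx E E' T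
          = ∑ T ∈ S.powerset.erase S, nEx E' E' T := by
        refine Finset.sum_congr rfl fun T hT => ?_
        rw [Finset.mem_erase, Finset.mem_powerset] at hT
        exact ih T (lt_of_le_of_ne hT.2 hT.1)
      omega
  have hpos : 0 < nEx E' E' Finset.univ := by
    rw [nEx, Finset.card_pos]
    exact ⟨id, Finset.mem_filter.mpr ⟨Finset.mem_univ _,
      fun a b hab => hab, by simp⟩⟩
  rw [← hEx] at hpos
  rw [nEx, Finset.card_pos] at hpos
  obtain ⟨f, hf⟩ := hpos
  rw [Finset.mem_filter] at hf
  refine hnosur ⟨f, hf.2.1, fun b => ?_⟩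
  have : b ∈ Finset.image f Finset.univ := hf.2.2 ▸ Finset.mem_univ b
  obtain ⟨a, _, ha⟩ := Finset.mem_image.mp this
  exact ⟨a, ha⟩
end

section
/- Let t₁, …, t_r be tuples in ℕ^s such that (1) for every coordinate i ≤ s there exists j with t_j(i) ≠ 0, and (2) for every pair of distinct coordinates i ≠ i' there exists j with t_j(i) ≠ t_j(i'). Then there exists a linear combination u = a₁t₁ + ⋯ + a_r t_r with non-negative integer coefficients such that all s entries of u are positive and pairwise distinct. -/
lemma digits_inj_aux : ∀ (r M : ℕ), ∀ d d' : Fin r → ℕ,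
    (∀ j, d j < M) → (∀ j, d' j < M) →
    (∑ j, d j * M ^ (j : ℕ)) = (∑ j, d' j * M ^ (j : ℕ)) → d = d' := by
  intro r
  induction r with
  | zero => intro M d d' _ _ _; funext j; exact absurd j.2 (by omega)
  | succ n ih =>
    intro M d d' hd hd' h
    have e : ∀ e : Fin (n+1) → ℕ,
        (∑ j, e j * M ^ (j : ℕ)) = e 0 + M * ∑ j : Fin n, e j.succ * M ^ (j : ℕ) := by
      intro e
      rw [Fin.sum_univ_succ, Finset.mul_sum, Fin.val_zero, pow_zero, mul_one]
      exact congrArg _ (Finset.sum_congr rfl fun x _ => by rw [Fin.val_succ, pow_succ]; ring)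
    rw [e d, e d'] at h
    have hM : 0 < M := lt_of_le_of_lt (Nat.zero_le _) (hd 0)
    have h0 : d 0 = d' 0 := by
      have := congrArg (· % M) h
      simpa [Nat.add_mul_mod_self_left, Nat.mod_eq_of_lt (hd 0),
        Nat.mod_eq_of_lt (hd' 0)] using this
    have hs : (∑ j : Fin n, d j.succ * M ^ (j : ℕ)) = ∑ j : Fin n, d' j.succ * M ^ (j : ℕ) := by
      have := h
      rw [h0] at this
      have := Nat.add_left_cancel this
      exact Nat.eq_of_mul_eq_mul_left hM this
    have := ih M (fun j => d j.succ) (fun j => d' j.succ)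
      (fun j => hd j.succ) (fun j => hd' j.succ) hs
    funext j
    rcases Fin.eq_zero_or_eq_succ j with hj | ⟨k, hk⟩
    · rw [hj]; exact h0
    · rw [hk]; exact congrFun this k

theorem exists_positive_distinct_linear_combination (r s : ℕ) (t : Fin r → Fin s → ℕ)
    (h1 : ∀ i : Fin s, ∃ j : Fin r, t j i ≠ 0)
    (h2 : ∀ i i' : Fin s, i ≠ i' → ∃ j : Fin r, t j i ≠ t j i') :
    ∃ a : Fin r → ℕ,
      (∀ i : Fin s, 0 < ∑ j, a j * t j i) ∧
      Function.Injective (fun i : Fin s => ∑ j, a j * t j i) := by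
  set M : ℕ := (Finset.univ.sup fun j : Fin r => Finset.univ.sup (t j)) + 1 with hM
  have hlt : ∀ (j : Fin r) (i : Fin s), t j i < M := by
    intro j i
    have : t j i ≤ Finset.univ.sup fun j : Fin r => Finset.univ.sup (t j) :=
      le_trans (Finset.le_sup (Finset.mem_univ i))
        (Finset.le_sup (f := fun j : Fin r => Finset.univ.sup (t j)) (Finset.mem_univ j))
    omega
  refine ⟨fun j => M ^ (j : ℕ), ?_, ?_⟩
  · intro i
    obtain ⟨j, hj⟩ := h1 i
    apply Finset.sum_pos' (fun k _ => Nat.zero_le _)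
    exact ⟨j, Finset.mem_univ j, Nat.mul_pos (Nat.pow_pos (by omega)) (Nat.pos_of_ne_zero hj)⟩
  · intro i i' h
    by_contra hne
    obtain ⟨j, hj⟩ := h2 i i' hne
    have h' : (∑ j, t j i * M ^ (j : ℕ)) = ∑ j, t j i' * M ^ (j : ℕ) := by
      simpa [mul_comm] using h
    have := digits_inj_aux r M (fun j => t j i) (fun j => t j i')
      (fun j => hlt j i) (fun j => hlt j i') h'
    exact hj (congrFun this j)
end

section
/- Let A be a finite directed graph and suppose (F, D) is a finite homomorphism duality with F = {A}, i.e., for every finite directed graph C: A → C if and only if C ↛ D for every D ∈ 𝒟. Then the class [A] of graphs homomorphically equivalent to A admits a right query algorithm over the Boolean semiring. -/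
structure FinDigraph where
  V : Type
  [fin : Fintype V]
  E : V → V → Prop

attribute [instance] FinDigraph.fin

def HomExists (A B : FinDigraph) : Prop :=
  ∃ f : A.V → B.V, IsHom A.E B.E f

def HomEquiv (A B : FinDigraph) : Prop :=
  HomExists A B ∧ HomExists B A

/-- The Boolean left profile of `D` with respect to the list of graphs `F`. -/
def leftProfileB {k : ℕ} (F : Fin k → FinDigraph) (D : FinDigraph) : Fin k → Prop :=
  fun i => HomExists (F i) D

/-- A class of finite digraphs admits a left query algorithm over the Boolean semiring. -/
def AdmitsLeftB (C : Set FinDigraph) : Prop :=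
  ∃ (k : ℕ) (F : Fin k → FinDigraph) (X : Set (Fin k → Prop)),
    ∀ D : FinDigraph, D ∈ C ↔ leftProfileB F D ∈ X

/-- The Boolean right profile of a graph with respect to a list of graphs. -/
def rightProfileB {k : ℕ} (F : Fin k → FinDigraph) (B : FinDigraph) : Fin k → Prop :=
  fun i => HomExists B (F i)

def AdmitsRightB (C : Set FinDigraph) : Prop :=
  ∃ (k : ℕ) (F : Fin k → FinDigraph) (X : Set (Fin k → Prop)),
    ∀ B : FinDigraph, B ∈ C ↔ rightProfileB F B ∈ X

theorem homEquiv_iff_of_duality {A B : FinDigraph} {m : ℕ} {𝒟 : Fin m → FinDigraph}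
    (hdual : ∀ C : FinDigraph, HomExists A C ↔ ∀ j, ¬ HomExists C (𝒟 j)) :
    HomEquiv A B ↔ HomExists B A ∧ ∀ j, ¬ HomExists B (𝒟 j) := by
  rw [HomEquiv, hdual B, and_comm]

theorem admitsRightB_of_mem_iff {C : Set FinDigraph} (A : FinDigraph) {m : ℕ}
    (𝒟 : Fin m → FinDigraph)
    (hC : ∀ B, B ∈ C ↔ HomExists B A ∧ ∀ j, ¬ HomExists B (𝒟 j)) :
    AdmitsRightB C := by
  refine ⟨m + 1, Fin.cons A 𝒟, {p | p 0 ∧ ∀ j : Fin m, ¬ p j.succ}, fun B => ?_⟩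
  simp only [hC, Set.mem_ofPred_eq, rightProfileB, Fin.cons_zero, Fin.cons_succ]

theorem duality_implies_homtype_rightB (A : FinDigraph) (m : ℕ)
    (𝒟 : Fin m → FinDigraph)
    (hdual : ∀ C : FinDigraph, HomExists A C ↔ ∀ j, ¬ HomExists C (𝒟 j)) :
    AdmitsRightB {B : FinDigraph | HomEquiv A B} :=
  admitsRightB_of_mem_iff A 𝒟 fun _ => homEquiv_iff_of_duality hdual
end
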